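/- Let γ ∈ [2π/3, π) and define η : [0, γ/3] → ℝ by η(α) = (sin(γ/3 − α))^{3/2}·(sin γ)^{−1/2} − sin(3α/2). Then η is strictly decreasing on [0, γ/3], η(0) > 0, and η(γ/3) < 0, so there is a unique α₀ ∈ (0, γ/3) with η(α₀) = 0; moreover α₀ < 2(π − γ)/3 if and only if γ < 5π/6. -/

import Mathlib

/-!
On `[0, γ/3]` the first term of `η` decreases because `γ/3 - α ∈ [0, π/3]`, and `sin (3α/2)`
increases because `3α/2 ∈ [0, π/2]`; the sign change then gives a unique root by the
intermediate value theorem. At `β = 2(π - γ)/3` one has `η β < 0` iff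
`sin (γ - 2π/3) < sin (π - γ)`, i.e. iff `γ < 5π/6`, and since `η` is strictly decreasing,
`α₀ < β` iff `η β < η α₀ = 0`.
-/

open Real Set

noncomputable section

def eta (γ α : ℝ) : ℝ :=
  sin (γ / 3 - α) ^ ((3:ℝ)/2) * sin γ ^ (-(1:ℝ)/2) - sin (3 * α / 2)

theorem StrictAntiOn.existsUnique_eq_zero {f : ℝ → ℝ} {a b : ℝ} (hab : a ≤ b)
    (hf : StrictAntiOn f (Icc a b)) (hcont : ContinuousOn f (Icc a b)) (ha : 0 < f a)
    (hb : f b < 0) : ∃! x, x ∈ Ioo a b ∧ f x = 0 := by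
  obtain ⟨x, hx, hfx⟩ := intermediate_value_Ioo' hab hcont ⟨hb, ha⟩
  exact ⟨x, ⟨hx, hfx⟩, fun y ⟨hy, hfy⟩ =>
    hf.injOn (Ioo_subset_Icc_self hy) (Ioo_subset_Icc_self hx) (hfy.trans hfx.symm)⟩

theorem Real.rpow_three_halves_mul_rpow_neg_half_lt_self_iff {x s : ℝ} (hx : 0 ≤ x) (hs : 0 < s) :
    x ^ ((3:ℝ)/2) * s ^ (-(1:ℝ)/2) < s ↔ x < s := by
  have hs_eq : s = s ^ ((3:ℝ)/2) * s ^ (-(1:ℝ)/2) := by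
    rw [← rpow_add hs]; norm_num
  conv_lhs => rhs; rw [hs_eq]
  rw [mul_lt_mul_iff_of_pos_right (rpow_pos_of_pos hs _),
    rpow_lt_rpow_iff hx hs.le (by norm_num)]

section

variable {γ : ℝ}

theorem continuous_eta (γ : ℝ) : Continuous (eta γ) := by
  unfold eta
  fun_prop (disch := norm_num)

theorem eta_strictAntiOn (hγ : γ ≤ π) : StrictAntiOn (eta γ) (Icc 0 (γ / 3)) := by
  intro a ⟨ha0, ha⟩ b ⟨hb0, hb⟩ hab
  have h_first : sin (γ / 3 - b) ^ ((3:ℝ)/2) ≤ sin (γ / 3 - a) ^ ((3:ℝ)/2) := by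
    gcongr
    · exact sin_nonneg_of_nonneg_of_le_pi (by linarith) (by linarith)
    · exact strictMonoOn_sin.monotoneOn ⟨by linarith, by linarith⟩ ⟨by linarith, by linarith⟩
        (by linarith)
  have h_second : sin (3 * a / 2) < sin (3 * b / 2) :=
    strictMonoOn_sin ⟨by linarith, by linarith⟩ ⟨by linarith, by linarith⟩ (by linarith)
  have := mul_le_mul_of_nonneg_right h_first (rpow_nonneg (sin_nonneg_of_nonneg_of_le_pi
    (by linarith) hγ) (-(1:ℝ)/2))
  unfold eta
  linarith

theorem eta_zero_pos (hγ0 : 0 < γ) (hγ : γ < π) : 0 < eta γ 0 := by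
  have h3 : 0 < sin (γ / 3) := sin_pos_of_pos_of_lt_pi (by linarith) (by linarith)
  have hsγ : 0 < sin γ := sin_pos_of_pos_of_lt_pi hγ0 hγ
  simpa [eta] using mul_pos (rpow_pos_of_pos h3 _) (rpow_pos_of_pos hsγ _)

theorem eta_self_div_three (γ : ℝ) : eta γ (γ / 3) = -sin (γ / 2) := by
  rw [eta, sub_self, sin_zero, zero_rpow (by norm_num)]
  ring_nf

theorem eta_self_div_three_neg (hγ0 : 0 < γ) (hγ : γ ≤ π) : eta γ (γ / 3) < 0 := by
  rw [eta_self_div_three, neg_neg_iff_pos]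
  exact sin_pos_of_pos_of_lt_pi (by linarith) (by linarith)

theorem eta_two_mul_pi_sub_div_three_neg_iff (hγ : γ ∈ Ico (2 * π / 3) π) :
    eta γ (2 * (π - γ) / 3) < 0 ↔ γ < 5 * π / 6 := by
  obtain ⟨hγ1, hγ2⟩ := hγ
  have hπ := pi_pos
  rw [eta, show γ / 3 - 2 * (π - γ) / 3 = γ - 2 * π / 3 by ring,
    show 3 * (2 * (π - γ) / 3) / 2 = π - γ by ring, sin_pi_sub, sub_neg,
    rpow_three_halves_mul_rpow_neg_half_lt_self_iff
      (sin_nonneg_of_nonneg_of_le_pi (by linarith) (by linarith))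
      (sin_pos_of_pos_of_lt_pi (by linarith) hγ2),
    ← sin_pi_sub γ,
    strictMonoOn_sin.lt_iff_lt ⟨by linarith, by linarith⟩ ⟨by linarith, by linarith⟩]
  constructor <;> intro h <;> linarith

end

theorem eta_root_bound (γ : ℝ) (hγ : γ ∈ Set.Ico (2 * Real.pi / 3) Real.pi) :
    let η : ℝ → ℝ := fun α =>
      Real.sin (γ / 3 - α) ^ ((3:ℝ)/2) * Real.sin γ ^ (-(1:ℝ)/2) - Real.sin (3 * α / 2)
    StrictAntiOn η (Set.Icc 0 (γ / 3)) ∧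
    0 < η 0 ∧ η (γ / 3) < 0 ∧
    (∃! α₀ : ℝ, α₀ ∈ Set.Ioo 0 (γ / 3) ∧ η α₀ = 0) ∧
    (∀ α₀ ∈ Set.Ioo 0 (γ / 3), η α₀ = 0 →
      (α₀ < 2 * (Real.pi - γ) / 3 ↔ γ < 5 * Real.pi / 6)) := by
  intro η
  obtain ⟨hγ1, hγ2⟩ := hγ
  have hγ0 : 0 < γ := by linarith [pi_pos]
  have hanti := eta_strictAntiOn hγ2.le
  have hpos := eta_zero_pos hγ0 hγ2
  have hneg := eta_self_div_three_neg hγ0 hγ2.le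
  refine ⟨hanti, hpos, hneg,
    hanti.existsUnique_eq_zero (by linarith) (continuous_eta γ).continuousOn hpos hneg,
    fun α₀ hα₀ hroot => ?_⟩
  have hβ : 2 * (π - γ) / 3 ∈ Icc 0 (γ / 3) := ⟨by linarith, by linarith⟩
  rw [← eta_two_mul_pi_sub_div_three_neg_iff ⟨hγ1, hγ2⟩, ← hroot]
  exact (hanti.lt_iff_gt hβ (Ioo_subset_Icc_self hα₀)).symm
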